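/- Let μ be a Borel probability measure on ℝ with finite first absolute moment and a positive C¹ density p_μ, and set v_μ = p_μ'/p_μ. Suppose there exist a, R > 0 such that v_μ(x)·x ≥ −a x² for all |x| > R. Then inf_x K̄_μ(x) > 0, where K̄_μ(x) = (1/p_μ(x)) ∫_x^∞ (y − ⟨μ⟩) p_μ(y) dy and ⟨μ⟩ = ∫ y μ(dy). In particular, if ⟨μ⟩ = 0 then K̄_μ(x) ≥ 1/a for all x with |x| > R. -/

import Mathlib

/-! On the right tail the curvature condition reads `p' ≥ -a y p`. Integrating over `[x, T]`
gives `p x - p T ≤ a ∫_x^∞ y p` for all `T ≥ x`; as the integrable `p` cannot stay above a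
positive constant on `[x, ∞)`, `p x ≤ a ∫_x^∞ y p`. This is `K̄ ≥ 1/a` for a centered measure,
and `K̄ ≥ 1/(2a)` as soon as `|x| ≥ 2|⟨μ⟩|`. The reflection `y ↦ -y` preserves `K̄` because
`∫ (y - ⟨μ⟩) p = 0`, which handles the left tail. In between, `K̄` is continuous and positive on
a compact interval. -/

open MeasureTheory Real Set

/-- The weight `K̄_μ(x) = (1/p(x)) ∫_x^∞ (y − m) p(y) dy` built from a density `p` and a
mean `m`. -/
noncomputable def Kbar (p : ℝ → ℝ) (m : ℝ) (x : ℝ) : ℝ :=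
  (∫ y in Set.Ioi x, (y - m) * p y) / p x

def IntegralCurvature (p : ℝ → ℝ) (a R : ℝ) : Prop :=
  ∀ x : ℝ, R < |x| → -(a * x ^ 2) ≤ deriv p x / p x * x

section Density

variable {α : Type*} [MeasurableSpace α] {μ : Measure α} {p : α → ℝ}

lemma integrable_withDensity_ofReal_iff (hp : Measurable p) (hp0 : ∀ x, 0 ≤ p x) {g : α → ℝ} :
    Integrable g (μ.withDensity fun x => ENNReal.ofReal (p x)) ↔
      Integrable (fun x => g x * p x) μ := by
  rw [integrable_withDensity_iff hp.ennreal_ofReal (ae_of_all _ fun _ => ENNReal.ofReal_lt_top)]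
  simp only [ENNReal.toReal_ofReal (hp0 _)]

lemma integral_withDensity_ofReal (hp : Measurable p) (hp0 : ∀ x, 0 ≤ p x) (g : α → ℝ) :
    ∫ x, g x ∂μ.withDensity (fun x => ENNReal.ofReal (p x)) = ∫ x, g x * p x ∂μ := by
  rw [integral_withDensity_eq_integral_toReal_smul hp.ennreal_ofReal
    (ae_of_all _ fun _ => ENNReal.ofReal_lt_top)]
  simp only [ENNReal.toReal_ofReal (hp0 _), smul_eq_mul, mul_comm]

end Density

lemma integral_sub_integral_mul_density_eq_zero {μ : Measure ℝ} [IsProbabilityMeasure μ]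
    {p : ℝ → ℝ} (hp : Measurable p) (hp0 : ∀ x, 0 ≤ p x)
    (hμ : μ = volume.withDensity fun x => ENNReal.ofReal (p x))
    (h_moment : Integrable (fun x : ℝ => x) μ) :
    ∫ y, (y - ∫ z, z ∂μ) * p y = 0 := by
  rw [← integral_withDensity_ofReal hp hp0, ← hμ, integral_sub h_moment (integrable_const _),
    integral_const, probReal_univ, one_smul, sub_self]

lemma MeasureTheory.Integrable.continuous_setIntegral_Ioi {f : ℝ → ℝ} (hf : Integrable f) :
    Continuous fun x => ∫ y in Ioi x, f y := by
  have h : (fun x => ∫ y in Ioi x, f y)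
      = fun x => (∫ y, f y) - ((∫ y in Iic (0:ℝ), f y) + ∫ t in (0:ℝ)..x, f t) := by
    funext x
    have h1 := intervalIntegral.integral_Iic_add_Ioi (hf.integrableOn (s := Iic x))
      (hf.integrableOn (s := Ioi x))
    have h2 := intervalIntegral.integral_Iic_sub_Iic (hf.integrableOn (s := Iic 0))
      (hf.integrableOn (s := Iic x))
    linarith
  rw [h]
  exact continuous_const.sub (continuous_const.add (hf.continuous_primitive 0))

variable {p : ℝ → ℝ} {a R m c x : ℝ}

lemma le_mul_setIntegral_Ioi_of_neg_mul_le_deriv (hp : ContDiff ℝ 1 p) (hp0 : ∀ y, 0 ≤ p y)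
    (hp_int : Integrable p) (hmom : IntegrableOn (fun y => y * p y) (Ioi x)) (ha : 0 ≤ a)
    (hx : 0 ≤ x) (hderiv : ∀ y ∈ Ici x, -(a * (y * p y)) ≤ deriv p y) :
    p x ≤ a * ∫ y in Ioi x, y * p y := by
  set I := ∫ y in Ioi x, y * p y
  -- otherwise `p ≥ p x - a I > 0` on `[x, ∞)`, which is not integrable
  by_contra! h
  have hlow : ∀ T ∈ Ici x, p x - a * I ≤ p T := by
    intro T hT
    have hftc : ∫ y in x..T, deriv p y = p T - p x :=
      intervalIntegral.integral_deriv_eq_sub (fun y _ => hp.differentiable one_ne_zero y)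
        ((hp.continuous_deriv le_rfl).intervalIntegrable _ _)
    have hyp_cont : Continuous fun y => y * p y := continuous_id.mul hp.continuous
    have hmono : ∫ y in x..T, -(a * (y * p y)) ≤ ∫ y in x..T, deriv p y :=
      intervalIntegral.integral_mono_on hT ((hyp_cont.const_mul a).neg.intervalIntegrable _ _)
        ((hp.continuous_deriv le_rfl).intervalIntegrable _ _) fun y hy => hderiv y hy.1
    have htail : ∫ y in x..T, y * p y ≤ I := by
      rw [intervalIntegral.integral_of_le hT]
      exact setIntegral_mono_set hmom
        (ae_restrict_of_forall_mem measurableSet_Ioi fun y hy =>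
          mul_nonneg (hx.trans hy.le) (hp0 y))
        Ioc_subset_Ioi_self.eventuallyLE
    rw [intervalIntegral.integral_neg, intervalIntegral.integral_const_mul, hftc] at hmono
    nlinarith
  have hfin := hp_int.measure_ge_lt_top (sub_pos.2 h)
  exact hfin.ne (measure_mono_top hlow Real.volume_Ici)

lemma IntegralCurvature.neg_mul_le_deriv (hcurv : IntegralCurvature p a R) (hpos : ∀ y, 0 < p y)
    (hR : 0 ≤ R) (hx : R < x) : -(a * (x * p x)) ≤ deriv p x := by
  have hx0 : 0 < x := hR.trans_lt hx
  have h := hcurv x (by rwa [abs_of_pos hx0])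
  have h1 : -(a * x) ≤ deriv p x / p x := le_of_mul_le_mul_right (by nlinarith) hx0
  rw [le_div_iff₀ (hpos x)] at h1
  linarith

lemma IntegralCurvature.comp_neg (hcurv : IntegralCurvature p a R) :
    IntegralCurvature (fun u => p (-u)) a R := by
  intro x hx
  have h := hcurv (-x) (by rwa [abs_neg])
  rw [deriv_comp_neg]
  convert h using 1 <;> ring

lemma integrable_sub_mul (hp_int : Integrable p) (hmom : Integrable fun y => y * p y) (m : ℝ) :
    Integrable fun y => (y - m) * p y := by
  refine (hmom.sub (hp_int.const_mul m)).congr (ae_of_all _ fun y => ?_)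
  simp only [Pi.sub_apply]
  ring

lemma MeasureTheory.Integrable.mul_comp_neg (hmom : Integrable fun y => y * p y) :
    Integrable fun u => u * p (-u) := by
  simpa using hmom.comp_neg.neg

lemma Kbar_comp_neg (hf : Integrable fun y => (y - m) * p y) (h0 : ∫ y, (y - m) * p y = 0)
    (x : ℝ) : Kbar (fun u => p (-u)) (-m) (-x) = Kbar p m x := by
  unfold Kbar
  simp only [neg_neg]
  congr 1
  have hsplit := intervalIntegral.integral_Iic_add_Ioi (hf.integrableOn (s := Iic x))
    hf.integrableOn
  have hrefl := integral_comp_neg_Ioi (-x) fun y => (y - m) * p y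
  rw [neg_neg] at hrefl
  rw [h0] at hsplit
  calc ∫ u in Ioi (-x), (u - -m) * p (-u) = -∫ u in Ioi (-x), (-u - m) * p (-u) := by
        rw [← integral_neg]; congr with u; ring
    _ = _ := by rw [hrefl]; linarith

lemma Kbar_pos_of_le (hpos : ∀ y, 0 < p y) (hf : Integrable fun y => (y - m) * p y)
    (hmx : m ≤ x) : 0 < Kbar p m x := by
  have hpos_on : ∀ y ∈ Ioi x, 0 < (y - m) * p y := fun y hy =>
    mul_pos (sub_pos.2 (hmx.trans_lt hy)) (hpos y)
  refine div_pos ?_ (hpos x)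
  rw [setIntegral_pos_iff_support_of_nonneg_ae
    (ae_restrict_of_forall_mem measurableSet_Ioi fun y hy => (hpos_on y hy).le) hf.integrableOn]
  have hsub : Ioi x ⊆ Function.support (fun y => (y - m) * p y) ∩ Ioi x :=
    fun y hy => ⟨(hpos_on y hy).ne', hy⟩
  exact (by simp : (0 : ENNReal) < volume (Ioi x)).trans_le (measure_mono hsub)

lemma Kbar_pos (hpos : ∀ y, 0 < p y) (hp_int : Integrable p) (hmom : Integrable fun y => y * p y)
    (h0 : ∫ y, (y - m) * p y = 0) (x : ℝ) : 0 < Kbar p m x := by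
  rcases le_or_gt m x with hmx | hxm
  · exact Kbar_pos_of_le hpos (integrable_sub_mul hp_int hmom m) hmx
  · rw [← Kbar_comp_neg (integrable_sub_mul hp_int hmom m) h0]
    exact Kbar_pos_of_le (fun y => hpos (-y))
      (integrable_sub_mul hp_int.comp_neg hmom.mul_comp_neg (-m)) (neg_le_neg hxm.le)

lemma continuous_Kbar (hp : Continuous p) (hpos : ∀ y, 0 < p y)
    (hf : Integrable fun y => (y - m) * p y) : Continuous (Kbar p m) :=
  hf.continuous_setIntegral_Ioi.div hp fun x => (hpos x).ne'

lemma div_le_Kbar_of_lt (hp : ContDiff ℝ 1 p) (hpos : ∀ y, 0 < p y) (hp_int : Integrable p)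
    (hmom : Integrable fun y => y * p y) (hcurv : IntegralCurvature p a R) (ha : 0 < a)
    (hR : 0 ≤ R) (hx : R < x) (hc : 0 ≤ c) (hc1 : c ≤ 1) (hm : |m| ≤ (1 - c) * x) :
    c / a ≤ Kbar p m x := by
  have hx0 : 0 ≤ x := hR.trans hx.le
  have hI : p x ≤ a * ∫ y in Ioi x, y * p y :=
    le_mul_setIntegral_Ioi_of_neg_mul_le_deriv hp (fun y => (hpos y).le) hp_int hmom.integrableOn
      ha.le hx0 fun y hy => hcurv.neg_mul_le_deriv hpos hR (hx.trans_le hy)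
  have hmono : c * ∫ y in Ioi x, y * p y ≤ ∫ y in Ioi x, (y - m) * p y := by
    rw [← integral_const_mul]
    refine setIntegral_mono_on (hmom.integrableOn.const_mul c)
      (integrable_sub_mul hp_int hmom m).integrableOn measurableSet_Ioi fun y hy => ?_
    have hcy : c * y ≤ y - m := by
      nlinarith [le_abs_self m, mul_le_mul_of_nonneg_left (le_of_lt hy) (sub_nonneg.2 hc1)]
    rw [← mul_assoc]
    exact mul_le_mul_of_nonneg_right hcy (hpos y).le
  rw [Kbar, le_div_iff₀ (hpos x), div_mul_eq_mul_div, div_le_iff₀ ha]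
  nlinarith [mul_le_mul_of_nonneg_left hI hc]

lemma div_le_Kbar_of_lt_abs (hp : ContDiff ℝ 1 p) (hpos : ∀ y, 0 < p y) (hp_int : Integrable p)
    (hmom : Integrable fun y => y * p y) (h0 : ∫ y, (y - m) * p y = 0)
    (hcurv : IntegralCurvature p a R) (ha : 0 < a) (hR : 0 ≤ R) (hx : R < |x|) (hc : 0 ≤ c)
    (hc1 : c ≤ 1) (hm : |m| ≤ (1 - c) * |x|) : c / a ≤ Kbar p m x := by
  rcases le_or_gt 0 x with hx0 | hx0
  · rw [abs_of_nonneg hx0] at hx hm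
    exact div_le_Kbar_of_lt hp hpos hp_int hmom hcurv ha hR hx hc hc1 hm
  · rw [abs_of_neg hx0] at hx hm
    rw [← Kbar_comp_neg (integrable_sub_mul hp_int hmom m) h0]
    exact div_le_Kbar_of_lt (hp.comp contDiff_neg) (fun y => hpos (-y)) hp_int.comp_neg
      hmom.mul_comp_neg hcurv.comp_neg ha hR hx hc hc1 (by rwa [abs_neg])

/-- Under the integral curvature condition `v_μ(x)·x ≥ −a x²` for `|x| > R`, the weight
`K̄_μ` has a positive infimum; moreover, if the measure is centered, `K̄_μ(x) ≥ 1/a` for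
`|x| > R`. -/
theorem Kbar_inf_pos_of_integral_curvature
    (μ : Measure ℝ) [IsProbabilityMeasure μ]
    (h_moment : Integrable (fun x : ℝ => x) μ)
    (p : ℝ → ℝ) (hp_C1 : ContDiff ℝ 1 p) (hp_pos : ∀ x, 0 < p x)
    (hp_dens : μ = volume.withDensity fun x => ENNReal.ofReal (p x))
    (a R : ℝ) (ha : 0 < a) (hR : 0 < R)
    (h_curv : ∀ x : ℝ, R < |x| → -(a * x ^ 2) ≤ (deriv p x / p x) * x) :
    (∃ α > (0 : ℝ), ∀ x, α ≤ Kbar p (∫ y, y ∂μ) x) ∧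
    ((∫ y, y ∂μ) = 0 → ∀ x : ℝ, R < |x| → 1 / a ≤ Kbar p 0 x) := by
  set m := ∫ y, y ∂μ
  have hp_meas : Measurable p := hp_C1.continuous.measurable
  have hp_nonneg : ∀ x, 0 ≤ p x := fun x => (hp_pos x).le
  have hp_int : Integrable p := by
    simpa only [one_mul] using (integrable_withDensity_ofReal_iff hp_meas hp_nonneg
      (g := fun _ => (1 : ℝ))).1 (by rw [← hp_dens]; exact integrable_const (1 : ℝ))
  have hmom : Integrable fun y => y * p y :=
    (integrable_withDensity_ofReal_iff hp_meas hp_nonneg).1 (by rwa [← hp_dens])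
  have h0 : ∫ y, (y - m) * p y = 0 :=
    integral_sub_integral_mul_density_eq_zero hp_meas hp_nonneg hp_dens h_moment
  refine ⟨?_, fun hm0 x hx => ?_⟩
  · set M := max R (2 * |m|)
    obtain ⟨x₀, -, hx₀⟩ := (isCompact_Icc (a := -M) (b := M)).exists_isMinOn
      (nonempty_Icc.2 (by linarith [le_max_left R (2 * |m|)]))
      (continuous_Kbar hp_C1.continuous hp_pos (integrable_sub_mul hp_int hmom m)).continuousOn
    refine ⟨min (Kbar p m x₀) (1 / 2 / a),
      lt_min (Kbar_pos hp_pos hp_int hmom h0 x₀) (by positivity), fun x => ?_⟩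
    rcases le_or_gt |x| M with hxM | hxM
    · exact (min_le_left _ _).trans (hx₀ (abs_le.1 hxM))
    · refine (min_le_right _ _).trans (div_le_Kbar_of_lt_abs hp_C1 hp_pos hp_int hmom h0
        h_curv ha hR.le (le_max_left _ _ |>.trans_lt hxM) (by norm_num) (by norm_num) ?_)
      linarith [le_max_right R (2 * |m|)]
  · rw [hm0] at h0
    simpa using div_le_Kbar_of_lt_abs hp_C1 hp_pos hp_int hmom h0 h_curv ha hR.le hx
      zero_le_one le_rfl (by simp)
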